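/- Filtration truth lemma: let Γ ⊆ For_MBCL be closed under subformulas, let M = ⟨W, Q, {R_w}, v⟩ be a model for MBCL built on a frame in F_demL, and let M^f_Γ be the filtration of M through Γ. Then for every formula A ∈ Γ and every world w ∈ W, M,w ⊨ A if and only if M^f_Γ,[w] ⊨ A. -/
import Mathlib


/-- Formulas of MBCL: variables, negation, box, diamond, conjunction,
disjunction, connexive implication. -/
inductive MForm : Type
  | var : ℕ → MForm
  | neg : MForm → MForm
  | box : MForm → MForm
  | dia : MForm → MForm
  | conj : MForm → MForm → MForm
  | disj : MForm → MForm → MForm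
  | imp : MForm → MForm → MForm
  deriving DecidableEq

/-- A model for MBCL: a nonempty set of worlds, an accessibility relation,
a family of relating relations indexed by worlds, and a valuation. -/
structure MModel where
  W : Type
  ne : Nonempty W
  Q : W → W → Prop
  R : W → MForm → MForm → Prop
  v : W → ℕ → Bool

/-- Truth of a formula at a world of an MBCL model. -/
def msat (M : MModel) : M.W → MForm → Prop
  | w, .var p => M.v w p = true
  | w, .neg B => ¬ msat M w B
  | w, .box B => ∀ u, M.Q w u → msat M u B
  | w, .dia B => ∃ u, M.Q w u ∧ msat M u B
  | w, .conj B C => msat M w B ∧ msat M w C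
  | w, .disj B C => msat M w B ∨ msat M w C
  | w, .imp B C => (¬ msat M w B ∨ msat M w C) ∧ M.R w B C

def mcondA1 (R : MForm → MForm → Prop) : Prop := ∀ A, ¬ R A (.neg A)
def mcondA2 (R : MForm → MForm → Prop) : Prop := ∀ A, ¬ R (.neg A) A
def mcondB0 (R : MForm → MForm → Prop) : Prop := ∀ A B, R A B → ¬ R A (.neg B)
def mcondB1 (R : MForm → MForm → Prop) : Prop :=
  ∀ A B, R (.imp A B) (.neg (.imp A (.neg B)))
def mcondB2 (R : MForm → MForm → Prop) : Prop :=
  ∀ A B, R (.imp A (.neg B)) (.neg (.imp A B))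
def mcondCUN (R : MForm → MForm → Prop) : Prop := ∀ A B, R A B → R (.neg A) (.neg B)

/-- ¬^j A : the formula A prefixed by j negations. -/
def mnegs : ℕ → MForm → MForm
  | 0, A => A
  | n + 1, A => .neg (mnegs n A)
/-- The demodalization function d : it erases all modal operators. -/
def demod : MForm → MForm
  | .var p => .var p
  | .neg A => .neg (demod A)
  | .box A => demod A
  | .dia A => demod A
  | .conj A B => .conj (demod A) (demod B)
  | .disj A B => .disj (demod A) (demod B)
  | .imp A B => .imp (demod A) (demod B)

/-- M is built on a frame in F_demL: at every world the relating relation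
satisfies (a1), (a2), (b0), (b1), (b2), and the family satisfies (dem-L). -/
def MFrameDemL (M : MModel) : Prop :=
  (∀ w : M.W,
    mcondA1 (M.R w) ∧ mcondA2 (M.R w) ∧ mcondB0 (M.R w) ∧ mcondB1 (M.R w) ∧
      mcondB2 (M.R w)) ∧
  ∀ (w : M.W) (A B : MForm), M.R w (demod A) (demod B) → M.R w A B

/-- Γ is closed under subformulas. -/
def SubClosed (Γ : Set MForm) : Prop :=
  (∀ A B : MForm, .conj A B ∈ Γ → A ∈ Γ ∧ B ∈ Γ) ∧
  (∀ A B : MForm, .disj A B ∈ Γ → A ∈ Γ ∧ B ∈ Γ) ∧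
  (∀ A B : MForm, .imp A B ∈ Γ → A ∈ Γ ∧ B ∈ Γ) ∧
  (∀ A : MForm, .neg A ∈ Γ → A ∈ Γ) ∧
  (∀ A : MForm, .box A ∈ Γ → A ∈ Γ) ∧
  (∀ A : MForm, .dia A ∈ Γ → A ∈ Γ)

/-- The equivalence ∼_Γ : two worlds agree on the truth of all formulas of Γ
and on the relating of all pairs of formulas of Γ. -/
def simRel (Γ : Set MForm) (M : MModel) (w₁ w₂ : M.W) : Prop :=
  (∀ A ∈ Γ, (msat M w₁ A ↔ msat M w₂ A)) ∧
  (∀ A ∈ Γ, ∀ B ∈ Γ, (M.R w₁ A B ↔ M.R w₂ A B))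

/-- Filtration truth lemma: if Mf is the filtration of M through a
subformula-closed set Γ (presented via the canonical projection
cl : M.W → Mf.W onto the ∼_Γ-classes, with accessibility, relating relations
and valuation defined as in the filtration), then M and Mf satisfy the same
formulas of Γ at corresponding worlds. -/
theorem filtration_truth_lemma (Γ : Set MForm) (hΓ : SubClosed Γ)
    (M : MModel) (hM : MFrameDemL M)
    (Mf : MModel) (cl : M.W → Mf.W)
    (hsurj : Function.Surjective cl)
    (hcl : ∀ w₁ w₂ : M.W, cl w₁ = cl w₂ ↔ simRel Γ M w₁ w₂)
    (hQ : ∀ w₁ w₂ : M.W,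
      Mf.Q (cl w₁) (cl w₂) ↔ ∃ u₁ u₂ : M.W, cl u₁ = cl w₁ ∧ cl u₂ = cl w₂ ∧ M.Q u₁ u₂)
    (hR : ∀ (w : M.W) (A B : MForm),
      Mf.R (cl w) A B ↔ (A ∈ Γ ∧ B ∈ Γ ∧ M.R w A B))
    (hv : ∀ (w : M.W) (p : ℕ), Mf.v (cl w) p = M.v w p) :
    ∀ A ∈ Γ, ∀ w : M.W, msat M w A ↔ msat Mf (cl w) A := by
  intro A
  induction A with
  | var p =>
    intro _ w
    simp only [msat, hv]
  | neg B ih =>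
    intro hmem w
    have hB := hΓ.2.2.2.1 B hmem
    simp only [msat]
    exact not_congr (ih hB w)
  | box B ih =>
    intro hmem w
    have hB := hΓ.2.2.2.2.1 B hmem
    simp only [msat]
    constructor
    · intro h u' hQ'
      obtain ⟨u, rfl⟩ := hsurj u'
      obtain ⟨u₁, u₂, h1, h2, hq⟩ := (hQ w u).mp hQ'
      have hw : msat M u₁ (.box B) := ((hcl u₁ w).mp h1).1 _ hmem |>.mpr h
      have hu2 : msat M u₂ B := hw u₂ hq
      have hu : msat M u B := ((hcl u₂ u).mp h2).1 B hB |>.mp hu2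
      exact (ih hB u).mp hu
    · intro h u hq
      have : Mf.Q (cl w) (cl u) := (hQ w u).mpr ⟨w, u, rfl, rfl, hq⟩
      exact (ih hB u).mpr (h (cl u) this)
  | dia B ih =>
    intro hmem w
    have hB := hΓ.2.2.2.2.2 B hmem
    simp only [msat]
    constructor
    · intro ⟨u, hq, hu⟩
      exact ⟨cl u, (hQ w u).mpr ⟨w, u, rfl, rfl, hq⟩, (ih hB u).mp hu⟩
    · intro ⟨u', hQ', hu'⟩
      obtain ⟨u, rfl⟩ := hsurj u'
      obtain ⟨u₁, u₂, h1, h2, hq⟩ := (hQ w u).mp hQ'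
      have hu2 : msat M u₂ B := ((hcl u₂ u).mp h2).1 B hB |>.mpr ((ih hB u).mpr hu')
      have : msat M u₁ (.dia B) := ⟨u₂, hq, hu2⟩
      exact ((hcl u₁ w).mp h1).1 _ hmem |>.mp this
  | conj B C ihB ihC =>
    intro hmem w
    obtain ⟨hB, hC⟩ := hΓ.1 B C hmem
    simp only [msat]
    exact and_congr (ihB hB w) (ihC hC w)
  | disj B C ihB ihC =>
    intro hmem w
    obtain ⟨hB, hC⟩ := hΓ.2.1 B C hmem
    simp only [msat]
    exact or_congr (ihB hB w) (ihC hC w)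
  | imp B C ihB ihC =>
    intro hmem w
    obtain ⟨hB, hC⟩ := hΓ.2.2.1 B C hmem
    simp only [msat]
    constructor
    · intro ⟨h1, h2⟩
      refine ⟨?_, (hR w B C).mpr ⟨hB, hC, h2⟩⟩
      rcases h1 with h | h
      · exact Or.inl fun hb => h ((ihB hB w).mpr hb)
      · exact Or.inr ((ihC hC w).mp h)
    · intro ⟨h1, h2⟩
      refine ⟨?_, ((hR w B C).mp h2).2.2⟩
      rcases h1 with h | h
      · exact Or.inl fun hb => h ((ihB hB w).mp hb)
      · exact Or.inr ((ihC hC w).mpr h)
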